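/- For positive semidefinite n×n matrices A, B and a contraction Z, Tr (A Z* B Z A)^p ≤ Tr A^p Z* B^p Z A^p for every integer p ≥ 1. -/

import Mathlib

open Matrix ComplexOrder

/-- The absolute value `|M| = (Mᴴ M)^{1/2}` of a complex matrix. -/
noncomputable def matAbs {n : ℕ} (M : Matrix (Fin n) (Fin n) ℂ) : Matrix (Fin n) (Fin n) ℂ :=
  ((Matrix.posSemidef_conjTranspose_mul_self M).1.eigenvectorUnitary : Matrix (Fin n) (Fin n) ℂ) *
    diagonal ((↑) ∘ (√·) ∘ (Matrix.posSemidef_conjTranspose_mul_self M).1.eigenvalues) *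
    (star ((Matrix.posSemidef_conjTranspose_mul_self M).1.eigenvectorUnitary :
      Matrix (Fin n) (Fin n) ℂ))

theorem matAbs_posSemidef {n : ℕ} (M : Matrix (Fin n) (Fin n) ℂ) : (matAbs M).PosSemidef := by
  unfold matAbs
  rw [Matrix.star_eq_conjTranspose]
  apply Matrix.PosSemidef.mul_mul_conjTranspose_same
  apply Matrix.PosSemidef.diagonal
  intro i
  simp only [Pi.zero_apply, Function.comp_apply]
  exact_mod_cast Real.sqrt_nonneg _

/-- Eigenvalues of a Hermitian matrix arranged in decreasing order:
`eigDesc hM j` is the `j`-th largest eigenvalue. -/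
noncomputable def eigDesc {n : ℕ} {M : Matrix (Fin n) (Fin n) ℂ} (hM : M.IsHermitian) :
    Fin n → ℝ :=
  fun i => hM.eigenvalues (Tuple.sort hM.eigenvalues i.rev)

/-- Eigenvalues of a Hermitian matrix arranged in increasing order. -/
noncomputable def eigAsc {n : ℕ} {M : Matrix (Fin n) (Fin n) ℂ} (hM : M.IsHermitian) :
    Fin n → ℝ :=
  fun i => hM.eigenvalues (Tuple.sort hM.eigenvalues i)

/-- The largest eigenvalue of a Hermitian matrix. -/
noncomputable def maxEig {n : ℕ} {M : Matrix (Fin n) (Fin n) ℂ} (hM : M.IsHermitian) : ℝ :=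
  ⨆ i, hM.eigenvalues i

/-- Real power `M^t` of a Hermitian matrix, via the spectral decomposition. -/
noncomputable def rpowH {n : ℕ} {M : Matrix (Fin n) (Fin n) ℂ} (hM : M.IsHermitian) (t : ℝ) :
    Matrix (Fin n) (Fin n) ℂ :=
  (hM.eigenvectorUnitary : Matrix (Fin n) (Fin n) ℂ) *
    Matrix.diagonal (fun i => ((hM.eigenvalues i ^ t : ℝ) : ℂ)) *
    star (hM.eigenvectorUnitary : Matrix (Fin n) (Fin n) ℂ)

theorem rpowH_isHermitian {n : ℕ} {M : Matrix (Fin n) (Fin n) ℂ} (hM : M.IsHermitian) (t : ℝ) :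
    (rpowH hM t).IsHermitian := by
  unfold rpowH
  unfold Matrix.IsHermitian
  simp [Matrix.conjTranspose_mul, Matrix.diagonal_conjTranspose, mul_assoc,
    Matrix.star_eq_conjTranspose]
  congr 2
  funext i
  simp [star]
  rfl

/-- The ℓ²→ℓ² operator norm of a complex matrix. -/
noncomputable def opN {n : ℕ} (M : Matrix (Fin n) (Fin n) ℂ) : ℝ :=
  ‖Matrix.toEuclideanCLM (𝕜 := ℂ) M‖

namespace ALT
open Matrix ComplexOrder Complex Finset

/-- `cf r w = r ^ w` for nonnegative real `r` and complex `w`, with `0 ^ w := 0`. -/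
noncomputable def cf (r : ℝ) (w : ℂ) : ℂ :=
  if r = 0 then 0 else Complex.exp (w * (Real.log r : ℂ))

lemma cf_zero_left (w : ℂ) : cf 0 w = 0 := by simp [cf]

lemma cf_mul (r : ℝ) (u v : ℂ) : cf r u * cf r v = cf r (u + v) := by
  unfold cf; split
  · simp
  · rw [← Complex.exp_add]; ring_nf

lemma cf_conj (r : ℝ) (w : ℂ) : (starRingEnd ℂ) (cf r w) = cf r ((starRingEnd ℂ) w) := by
  unfold cf; split
  · simp
  · rw [← Complex.exp_conj]; congr 1; simp

lemma cf_abs {r : ℝ} (hr : 0 ≤ r) (w : ℂ) :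
    ‖cf r w‖ = if r = 0 then 0 else r ^ w.re := by
  unfold cf; split
  · simp
  · rename_i h
    have hr' : 0 < r := lt_of_le_of_ne hr (Ne.symm h)
    rw [Complex.norm_exp, Real.rpow_def_of_pos hr']
    congr 1
    simp [mul_comm]

/-- `cf` at a real exponent, as a real power. -/
lemma cf_real {r : ℝ} (hr : 0 ≤ r) (t : ℝ) :
    cf r (t : ℂ) = ((if r = 0 then (0:ℝ) else r ^ t : ℝ) : ℂ) := by
  unfold cf; split
  · simp
  · rename_i h
    have hr' : 0 < r := lt_of_le_of_ne hr (Ne.symm h)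
    rw [Real.rpow_def_of_pos hr', Complex.ofReal_exp, ← Complex.ofReal_mul, mul_comm]

lemma cf_one_exp {r : ℝ} (hr : 0 ≤ r) : cf r (1 : ℂ) = (r : ℂ) := by
  rw [show (1:ℂ) = ((1:ℝ):ℂ) by norm_num, cf_real hr]
  split
  · simp_all
  · norm_num

lemma cf_nat {r : ℝ} (hr : 0 ≤ r) {k : ℕ} (hk : 1 ≤ k) : cf r (k : ℂ) = (r : ℂ) ^ k := by
  rw [show ((k:ℕ):ℂ) = ((k:ℝ):ℂ) by norm_num, cf_real hr]
  split
  · rename_i h; subst h; simp [zero_pow (by omega : k ≠ 0)]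
  · rename_i h
    have hr' : 0 < r := lt_of_le_of_ne hr (Ne.symm h)
    rw [Real.rpow_natCast]; norm_num

section helpers
variable {n : ℕ}

/-- Sum of squared norms of entries of a vector. -/
noncomputable def ns (x : Fin n → ℂ) : ℝ := ∑ i, Complex.normSq (x i)

lemma ns_nonneg (x : Fin n → ℂ) : 0 ≤ ns x :=
  Finset.sum_nonneg fun i _ => Complex.normSq_nonneg _

lemma dot_star_self (x : Fin n → ℂ) : dotProduct (star x) x = (ns x : ℂ) := by
  simp [dotProduct, ns, Complex.normSq_eq_conj_mul_self]

lemma cs_abs (x y : Fin n → ℂ) :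
    ‖dotProduct (star x) y‖ ≤ Real.sqrt (ns x) * Real.sqrt (ns y) := by
  have h1 : ‖dotProduct (star x) y‖ ≤ ∑ i, ‖x i‖ * ‖y i‖ := by
    refine le_trans (norm_sum_le _ _) (le_of_eq ?_)
    refine Finset.sum_congr rfl fun i _ => ?_
    simp [Pi.star_apply, norm_mul]
  have h2 : (∑ i, ‖x i‖ * ‖y i‖) ^ 2 ≤ ns x * ns y := by
    have := Finset.sum_mul_sq_le_sq_mul_sq Finset.univ
      (fun i => ‖x i‖) (fun i => ‖y i‖)
    simpa [ns, Complex.sq_norm] using this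
  have h3 : (∑ i, ‖x i‖ * ‖y i‖) ≤ Real.sqrt (ns x * ns y) := by
    have h4 := Real.sqrt_le_sqrt h2
    rwa [Real.sqrt_sq (Finset.sum_nonneg fun i _ =>
      mul_nonneg (norm_nonneg _) (norm_nonneg _))] at h4
  calc ‖dotProduct (star x) y‖ ≤ _ := h1
    _ ≤ Real.sqrt (ns x * ns y) := h3
    _ = _ := Real.sqrt_mul (ns_nonneg x) _

lemma dot2 (M N : Matrix (Fin n) (Fin n) ℂ) (v : Fin n → ℂ) :
    dotProduct (star (M *ᵥ v)) (N *ᵥ v) = dotProduct (star v) ((Mᴴ * N) *ᵥ v) := by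
  rw [← mulVec_mulVec, dotProduct_mulVec, star_mulVec, dotProduct_mulVec, dotProduct_mulVec]

lemma conj_entry (V X : Matrix (Fin n) (Fin n) ℂ) (k : Fin n) :
    (Vᴴ * X * V) k k = dotProduct (star (fun i => V i k)) (X *ᵥ (fun i => V i k)) := by
  simp only [mul_apply, conjTranspose_apply, dotProduct, mulVec, Finset.sum_mul, Finset.mul_sum]
  rw [Finset.sum_comm]
  exact Finset.sum_congr rfl fun i _ => Finset.sum_congr rfl fun j _ => by
    simp [Pi.star_apply]; ring

lemma trace_mul_diag (M : Matrix (Fin n) (Fin n) ℂ) (d : Fin n → ℂ) :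
    trace (M * diagonal d) = ∑ i, d i * M i i := by
  simp only [trace, Matrix.diag, mul_diagonal]
  exact Finset.sum_congr rfl fun i _ => by ring

lemma PXQ (P X Q : Matrix (Fin n) (Fin n) ℂ) (k : Fin n) :
    (P * X * Q) k k = ∑ i, ∑ j, P k i * X i j * Q j k := by
  simp only [mul_apply, Finset.sum_mul]
  rw [Finset.sum_comm]

end helpers
variable {n : ℕ}

noncomputable def Dc (c : Fin n → ℝ) (w : ℂ) : Matrix (Fin n) (Fin n) ℂ :=
  diagonal fun i => cf (c i) w

lemma Dc_mul_Dc (c : Fin n → ℝ) (u v : ℂ) : Dc c u * Dc c v = Dc c (u + v) := by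
  simp only [Dc, diagonal_mul_diagonal]
  have : (fun i => cf (c i) u * cf (c i) v) = fun i => cf (c i) (u + v) :=
    funext fun i => cf_mul _ _ _
  rw [this]

lemma Dc_conjT (c : Fin n → ℝ) (w : ℂ) : (Dc c w)ᴴ = Dc c ((starRingEnd ℂ) w) := by
  simp only [Dc, diagonal_conjTranspose]
  have : (star fun i => cf (c i) w) = fun i => cf (c i) ((starRingEnd ℂ) w) := by
    funext i
    simp only [Pi.star_apply, RCLike.star_def]
    exact cf_conj _ _
  rw [this]

lemma ns_Dc_le {c : Fin n → ℝ} {w : ℂ} (h : ∀ i, ‖cf (c i) w‖ ≤ 1)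
    (x : Fin n → ℂ) : ns (Dc c w *ᵥ x) ≤ ns x := by
  unfold ns
  refine Finset.sum_le_sum fun i _ => ?_
  rw [Dc, mulVec_diagonal, Complex.normSq_mul]
  calc Complex.normSq (cf (c i) w) * Complex.normSq (x i)
      ≤ 1 * Complex.normSq (x i) := by
        refine mul_le_mul_of_nonneg_right ?_ (Complex.normSq_nonneg _)
        rw [← Complex.sq_norm]
        exact pow_le_one₀ (norm_nonneg _) (h i)
    _ = _ := one_mul _
  
lemma contraction {W : Matrix (Fin n) (Fin n) ℂ}
    (hW : ((1 : Matrix (Fin n) (Fin n) ℂ) - Wᴴ * W).PosSemidef) (y : Fin n → ℂ) :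
    ns (W *ᵥ y) ≤ ns y := by
  have h := hW.dotProduct_mulVec_nonneg y
  rw [sub_mulVec, one_mulVec, dotProduct_sub, dot_star_self, ← dot2, dot_star_self] at h
  rw [← Complex.ofReal_sub, Complex.zero_le_real] at h
  linarith

lemma cf_abs_le_one {r : ℝ} (hr : 0 ≤ r) {w : ℂ} (hw : w.re = 0) :
    ‖cf r w‖ ≤ 1 := by
  rw [cf_abs hr, hw]
  split
  · norm_num
  · rw [Real.rpow_zero]

lemma cf_abs_le_max {r : ℝ} (hr : 0 ≤ r) {u v : ℝ} {w : ℂ} (h : w.re ∈ Set.Icc u v) :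
    ‖cf r w‖ ≤ max (r ^ u) (r ^ v) := by
  rw [cf_abs hr]
  split
  · positivity
  · rename_i hne
    have hr' : 0 < r := lt_of_le_of_ne hr (Ne.symm hne)
    rcases le_total 1 r with h1 | h1
    · exact le_max_of_le_right (Real.rpow_le_rpow_of_exponent_le h1 h.2)
    · exact le_max_of_le_left (Real.rpow_le_rpow_of_exponent_ge hr' h1 h.1)

lemma cf_diff {r : ℝ} {f : ℂ → ℂ} (hf : Differentiable ℂ f) :
    Differentiable ℂ (fun z => cf r (f z)) := by
  unfold cf
  split
  · exact differentiable_const 0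
  · exact (hf.mul_const _).cexp

lemma real_cs {n : ℕ} (f g : Fin n → ℝ) (hf : ∀ i, 0 ≤ f i) (hg : ∀ i, 0 ≤ g i) :
    (∑ i, f i * g i) ≤ Real.sqrt (∑ i, f i ^ 2) * Real.sqrt (∑ i, g i ^ 2) := by
  have h2 := Finset.sum_mul_sq_le_sq_mul_sq Finset.univ f g
  have h4 := Real.sqrt_le_sqrt h2
  rwa [Real.sqrt_sq (Finset.sum_nonneg fun i _ => mul_nonneg (hf i) (hg i)),
    Real.sqrt_mul (Finset.sum_nonneg fun i _ => sq_nonneg _)] at h4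

/-- final real-arithmetic step -/
lemma arith {m R : ℝ} {x : ℝ} (hm : 0 ≤ m) (hR : 0 ≤ R) (hx : 0 < x)
    (h : m ≤ m ^ (1-x) * (Real.sqrt m * Real.sqrt R) ^ x) : m ≤ R := by
  rcases eq_or_lt_of_le hm with h0 | hm0
  · rw [← h0]; exact hR
  have key : m ^ (1:ℝ) ≤ m ^ (1 - x/2) * R ^ (x/2) := by
    rw [Real.rpow_one]
    refine le_trans h (le_of_eq ?_)
    rw [Real.mul_rpow (Real.sqrt_nonneg _) (Real.sqrt_nonneg _), Real.sqrt_eq_rpow,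
      Real.sqrt_eq_rpow, ← Real.rpow_mul hm, ← Real.rpow_mul hR, ← mul_assoc,
      ← Real.rpow_add hm0]
    congr 2
    · ring
    · ring
  have h2 : m ^ (x/2) ≤ R ^ (x/2) := by
    have h3 : m ^ (1:ℝ) / m ^ (1 - x/2) ≤ R ^ (x/2) := by
      rw [div_le_iff₀ (Real.rpow_pos_of_pos hm0 _)]
      calc m ^ (1:ℝ) ≤ m ^ (1 - x/2) * R ^ (x/2) := key
        _ = R ^ (x/2) * m ^ (1 - x/2) := mul_comm _ _
    rwa [← Real.rpow_sub hm0, show (1:ℝ) - (1 - x/2) = x/2 by ring] at h3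
  have h4 := Real.rpow_le_rpow (Real.rpow_nonneg hm _) h2
    (le_of_lt (by positivity : (0:ℝ) < 2/x))
  rwa [← Real.rpow_mul hm, ← Real.rpow_mul hR,
    show x/2 * (2/x) = 1 by field_simp, Real.rpow_one, Real.rpow_one] at h4

theorem key {n : ℕ} (a b : Fin n → ℝ) (ha : ∀ i, 0 ≤ a i) (hb : ∀ i, 0 ≤ b i)
    (W : Matrix (Fin n) (Fin n) ℂ)
    (hW : ((1 : Matrix (Fin n) (Fin n) ℂ) - Wᴴ * W).PosSemidef)
    (p : ℕ) (hp : 1 ≤ p) :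
    trace ((Dc a 1 * Wᴴ * Dc b 1 * W * Dc a 1) ^ p)
      ≤ trace (Dc a (p:ℂ) * Wᴴ * Dc b (p:ℂ) * W * Dc a (p:ℂ)) := by
  have hpR : (0:ℝ) < (p:ℝ) := by exact_mod_cast Nat.pos_of_ne_zero (by omega)
  -- exponent functions
  set c1 : ℝ := (p:ℝ)/2 with hc1
  set d0 : ℝ := (2*(p:ℝ)-1)/2 with hd0
  set w1 : ℂ → ℂ := fun z => (c1:ℂ) * z with hw1
  set w2 : ℂ → ℂ := fun z => ((p:ℝ):ℂ) * z with hw2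
  set ee : ℂ → ℂ := fun z => (d0:ℂ) - (c1:ℂ) * z with hee
  set G : ℂ → Matrix (Fin n) (Fin n) ℂ := fun z => Dc b (w1 z) * W * Dc a (w2 z) with hG
  set z₀ : ℂ := (((p:ℝ)⁻¹ : ℝ) : ℂ) with hz₀
  set S : Matrix (Fin n) (Fin n) ℂ := G z₀ with hSdef
  -- S in closed form
  have hSL : S = Dc b ((2:ℂ)⁻¹) * W * Dc a 1 := by
    have e1 : (c1:ℂ) * z₀ = (2:ℂ)⁻¹ := by
      rw [hz₀, ← Complex.ofReal_mul, hc1,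
        show ((p:ℝ)/2 * ((p:ℝ))⁻¹) = 2⁻¹ by field_simp]
      push_cast
      ring
    have e2 : (((p:ℝ)):ℂ) * z₀ = 1 := by
      rw [hz₀, ← Complex.ofReal_mul, mul_inv_cancel₀ hpR.ne']
      push_cast
      ring
    rw [hSdef, hG]
    dsimp only
    rw [hw1, hw2]
    dsimp only
    rw [e1, e2]
  have hS : (Sᴴ * S).PosSemidef := posSemidef_conjTranspose_mul_self S
  set μ : Fin n → ℝ := hS.1.eigenvalues with hμdef
  have hμ : ∀ k, 0 ≤ μ k := hS.eigenvalues_nonneg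
  set V : Matrix (Fin n) (Fin n) ℂ := (hS.1.eigenvectorUnitary : Matrix (Fin n) (Fin n) ℂ)
    with hVdef
  have hV1 : Vᴴ * V = 1 := by
    rw [← Matrix.star_eq_conjTranspose]
    exact Matrix.mem_unitaryGroup_iff'.mp hS.1.eigenvectorUnitary.2
  have hV2 : V * Vᴴ = 1 := by
    rw [← Matrix.star_eq_conjTranspose]
    exact Matrix.mem_unitaryGroup_iff.mp hS.1.eigenvectorUnitary.2
  have spec : Sᴴ * S = V * diagonal (fun k => (μ k : ℂ)) * Vᴴ := by
    rw [← Matrix.star_eq_conjTranspose]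
    exact hS.1.spectral_theorem
  have specD : Vᴴ * (Sᴴ * S) * V = diagonal (fun k => (μ k : ℂ)) := by
    rw [spec]
    calc Vᴴ * (V * diagonal (fun k => (μ k : ℂ)) * Vᴴ) * V
        = (Vᴴ * V) * diagonal (fun k => (μ k : ℂ)) * (Vᴴ * V) := by
          simp only [Matrix.mul_assoc]
      _ = _ := by rw [hV1]; simp
  set vcol : Fin n → Fin n → ℂ := fun k => (fun i => V i k) with hvcol
  have hcol1 : ∀ k, ns (vcol k) = 1 := by
    intro k
    have h1 := conj_entry V 1 k
    rw [Matrix.mul_one, hV1, one_mulVec, dot_star_self] at h1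
    have h2 : ((ns (vcol k) : ℝ) : ℂ) = ((1:ℝ):ℂ) := by
      rw [← h1]; simp
    exact_mod_cast h2
  have hcolS : ∀ k, ns (S *ᵥ vcol k) = μ k := by
    intro k
    have h1 := conj_entry V (Sᴴ * S) k
    rw [specD, ← dot2, dot_star_self] at h1
    have h2 : Matrix.diagonal (fun k => (μ k : ℂ)) k k = (μ k : ℂ) := by simp
    rw [h2] at h1
    exact_mod_cast h1.symm
  have F1 : Sᴴ * S = Dc a 1 * Wᴴ * Dc b 1 * W * Dc a 1 := by
    rw [hSL, conjTranspose_mul, conjTranspose_mul, Dc_conjT, Dc_conjT]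
    have e1 : (starRingEnd ℂ) 1 = 1 := by simp
    have e2 : (starRingEnd ℂ) (2⁻¹:ℂ) = 2⁻¹ := by simp [Complex.ext_iff]
    rw [e1, e2]
    have e3 : ((2:ℂ)⁻¹ + 2⁻¹) = 1 := by norm_num
    calc Dc a 1 * (Wᴴ * Dc b 2⁻¹) * (Dc b 2⁻¹ * W * Dc a 1)
        = Dc a 1 * Wᴴ * (Dc b 2⁻¹ * Dc b 2⁻¹) * W * Dc a 1 := by
          simp only [Matrix.mul_assoc]
      _ = _ := by rw [Dc_mul_Dc, e3]
  have powVD : ∀ q : ℕ, (V * diagonal (fun k => (μ k:ℂ)) * Vᴴ)^q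
      = V * (diagonal (fun k => (μ k:ℂ)))^q * Vᴴ := by
    intro q
    induction q with
    | zero => simp [hV2]
    | succ q ih =>
        rw [pow_succ, ih, pow_succ]
        calc V * (diagonal (fun k => (μ k:ℂ)))^q * Vᴴ * (V * diagonal (fun k => (μ k:ℂ)) * Vᴴ)
            = V * (diagonal (fun k => (μ k:ℂ)))^q * (Vᴴ * V) * diagonal (fun k => (μ k:ℂ)) * Vᴴ := by
              simp only [Matrix.mul_assoc]
          _ = _ := by rw [hV1, Matrix.mul_one]; simp only [Matrix.mul_assoc]
  set m : ℝ := ∑ k, μ k ^ p with hmdef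
  have hm0 : 0 ≤ m := Finset.sum_nonneg fun k _ => pow_nonneg (hμ k) p
  have hLm : trace ((Dc a 1 * Wᴴ * Dc b 1 * W * Dc a 1)^p) = (m:ℂ) := by
    rw [← F1, spec, powVD, trace_mul_cycle, hV1, Matrix.one_mul, diagonal_pow, trace_diagonal,
      hmdef]
    push_cast
    exact Finset.sum_congr rfl fun i _ => by simp
  set T : ℂ → Matrix (Fin n) (Fin n) ℂ := fun z => V * Dc μ (ee z) * Vᴴ * Sᴴ with hT
  set H : ℂ → ℂ := fun z => trace (G z * T z) with hHdef
  have Hrep : ∀ z, H z = ∑ k, cf (μ k) (ee z) * ((Vᴴ * Sᴴ) * G z * V) k k := by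
    intro z
    have h1 : G z * T z = (G z * V) * Dc μ (ee z) * (Vᴴ * Sᴴ) := by
      rw [hT]; simp only [Matrix.mul_assoc]
    have h2 : H z = trace ((Vᴴ * Sᴴ) * (G z * V) * Dc μ (ee z)) := by
      rw [hHdef]; dsimp only; rw [h1, trace_mul_cycle]
    rw [h2, show Dc μ (ee z) = diagonal (fun k => cf (μ k) (ee z)) from rfl, trace_mul_diag]
    refine Finset.sum_congr rfl fun k _ => ?_
    congr 2
    simp only [Matrix.mul_assoc]
  have entry_eq : ∀ z k, ((Vᴴ * Sᴴ) * G z * V) k k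
      = dotProduct (star (S *ᵥ vcol k)) (G z *ᵥ vcol k) := by
    intro z k
    have h1 : (Vᴴ * Sᴴ) * G z * V = Vᴴ * (Sᴴ * G z) * V := by simp only [Matrix.mul_assoc]
    rw [h1, conj_entry, ← dot2]
  have entrybound : ∀ z k, ‖((Vᴴ * Sᴴ) * G z * V) k k‖
      ≤ Real.sqrt (μ k) * Real.sqrt (ns (G z *ᵥ vcol k)) := by
    intro z k
    rw [entry_eq]
    have h := cs_abs (S *ᵥ vcol k) (G z *ᵥ vcol k)
    rwa [hcolS] at h
  have hGmv : ∀ z (x : Fin n → ℂ), G z *ᵥ x = Dc b (w1 z) *ᵥ (W *ᵥ (Dc a (w2 z) *ᵥ x)) := by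
    intro z x
    rw [hG]; dsimp only
    rw [mulVec_mulVec, mulVec_mulVec]
  have hre1 : ∀ z : ℂ, (w1 z).re = c1 * z.re := fun z => Complex.re_ofReal_mul _ _
  have hre2 : ∀ z : ℂ, (w2 z).re = (p:ℝ) * z.re := fun z => Complex.re_ofReal_mul _ _
  have hre3 : ∀ z : ℂ, (ee z).re = d0 - c1 * z.re := by
    intro z
    rw [hee]; dsimp only
    rw [Complex.sub_re, Complex.ofReal_re, Complex.re_ofReal_mul]
  have nsG0 : ∀ z, z.re = 0 → ∀ k, ns (G z *ᵥ vcol k) ≤ 1 := by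
    intro z hz k
    rw [hGmv]
    calc ns (Dc b (w1 z) *ᵥ (W *ᵥ (Dc a (w2 z) *ᵥ vcol k)))
        ≤ ns (W *ᵥ (Dc a (w2 z) *ᵥ vcol k)) :=
          ns_Dc_le (fun i => cf_abs_le_one (hb i) (by rw [hre1, hz, mul_zero])) _
      _ ≤ ns (Dc a (w2 z) *ᵥ vcol k) := contraction hW _
      _ ≤ ns (vcol k) :=
          ns_Dc_le (fun i => cf_abs_le_one (ha i) (by rw [hre2, hz, mul_zero])) _
      _ = 1 := hcol1 k
  have bound0 : ∀ z, z.re = 0 → ‖H z‖ ≤ m := by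
    intro z hz
    rw [Hrep z]
    calc ‖∑ k, cf (μ k) (ee z) * ((Vᴴ * Sᴴ) * G z * V) k k‖
        ≤ ∑ k, ‖cf (μ k) (ee z) * ((Vᴴ * Sᴴ) * G z * V) k k‖ :=
          norm_sum_le _ _
      _ ≤ ∑ k, μ k ^ p := by
          refine Finset.sum_le_sum fun k _ => ?_
          rw [norm_mul]
          by_cases hk : μ k = 0
          · rw [cf_abs (hμ k), if_pos hk, zero_mul]
            positivity
          · have hkpos : 0 < μ k := lt_of_le_of_ne (hμ k) (Ne.symm hk)
            rw [cf_abs (hμ k), if_neg hk]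
            have h1 : ‖((Vᴴ * Sᴴ) * G z * V) k k‖ ≤ Real.sqrt (μ k) := by
              refine le_trans (entrybound z k) ?_
              calc Real.sqrt (μ k) * Real.sqrt (ns (G z *ᵥ vcol k))
                  ≤ Real.sqrt (μ k) * 1 := by
                    refine mul_le_mul_of_nonneg_left ?_ (Real.sqrt_nonneg _)
                    rw [show (1:ℝ) = Real.sqrt 1 by rw [Real.sqrt_one]]
                    exact Real.sqrt_le_sqrt (nsG0 z hz k)
                _ = Real.sqrt (μ k) := mul_one _
            calc μ k ^ (ee z).re * ‖((Vᴴ * Sᴴ) * G z * V) k k‖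
                ≤ μ k ^ (ee z).re * Real.sqrt (μ k) := by
                  exact mul_le_mul_of_nonneg_left h1 (Real.rpow_nonneg (hμ k) _)
              _ = μ k ^ p := by
                  rw [hre3, hz, mul_zero, sub_zero, Real.sqrt_eq_rpow,
                    ← Real.rpow_add hkpos, ← Real.rpow_natCast (μ k) p]
                  congr 1
                  rw [hd0]; ring
      _ = m := hmdef.symm
  -- Frobenius norm identity
  have frob : ∀ M : Matrix (Fin n) (Fin n) ℂ,
      (∑ k, (ns (M *ᵥ vcol k) : ℂ)) = trace (Mᴴ * M) := by
    intro M
    have h1 : ∀ k, (ns (M *ᵥ vcol k):ℂ) = (Vᴴ * (Mᴴ * M) * V) k k := by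
      intro k
      rw [conj_entry, ← dot2, dot_star_self]
    rw [Finset.sum_congr rfl (fun k _ => h1 k)]
    have h2 : (∑ k, (Vᴴ * (Mᴴ*M) * V) k k) = trace (Vᴴ * (Mᴴ*M) * V) := by
      rw [Matrix.trace]; rfl
    rw [h2, trace_mul_cycle, ← Matrix.mul_assoc, hV2, Matrix.one_mul]
  have traceForm : ∀ (u v : ℂ),
      trace ((Dc b u * W * Dc a v)ᴴ * (Dc b u * W * Dc a v))
        = trace (Wᴴ * Dc b ((starRingEnd ℂ) u + u) * W * Dc a (v + (starRingEnd ℂ) v)) := by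
    intro u v
    rw [conjTranspose_mul, conjTranspose_mul, Dc_conjT, Dc_conjT]
    have h1 : Dc a ((starRingEnd ℂ) v) * (Wᴴ * Dc b ((starRingEnd ℂ) u)) * (Dc b u * W * Dc a v)
        = Dc a ((starRingEnd ℂ) v) * (Wᴴ * (Dc b ((starRingEnd ℂ) u + u)) * W * Dc a v) := by
      rw [← Dc_mul_Dc]
      simp only [Matrix.mul_assoc]
    rw [h1, trace_mul_comm]
    simp only [Matrix.mul_assoc]
    rw [Dc_mul_Dc]
  set R2c : ℂ := trace (Dc a (p:ℂ) * Wᴴ * Dc b (p:ℂ) * W * Dc a (p:ℂ)) with hR2cdef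
  have traceRHS : R2c = trace (Wᴴ * (Dc b (p:ℂ) * (W * Dc a ((p:ℂ) + (p:ℂ))))) := by
    rw [hR2cdef]
    have h1 : Dc a (p:ℂ) * Wᴴ * Dc b (p:ℂ) * W * Dc a (p:ℂ)
        = Dc a (p:ℂ) * (Wᴴ * (Dc b (p:ℂ) * (W * Dc a (p:ℂ)))) := by
      simp only [Matrix.mul_assoc]
    rw [h1, trace_mul_comm]
    simp only [Matrix.mul_assoc]
    rw [Dc_mul_Dc]
  have lineG : ∀ z, z.re = 1 → trace ((G z)ᴴ * G z) = R2c := by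
    intro z hz
    rw [hG]; dsimp only
    rw [traceForm]
    have e1 : (starRingEnd ℂ) (w1 z) + w1 z = ((p:ℂ)) := by
      rw [add_comm, Complex.add_conj, hre1, hz, mul_one, hc1]
      push_cast; ring
    have e2 : w2 z + (starRingEnd ℂ) (w2 z) = ((p:ℂ) + (p:ℂ)) := by
      rw [Complex.add_conj, hre2, hz, mul_one]
      push_cast; ring
    rw [e1, e2, traceRHS]
    congr 1
    simp only [Matrix.mul_assoc]
  set R2 : ℝ := ∑ k, ns (G 1 *ᵥ vcol k) with hR2def
  have hR20 : 0 ≤ R2 := Finset.sum_nonneg fun k _ => ns_nonneg _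
  have hR2c : R2c = (R2:ℂ) := by
    rw [← lineG 1 (by simp), ← frob (G 1), hR2def]
    push_cast
    rfl
  have nsline1 : ∀ z, z.re = 1 → (∑ k, ns (G z *ᵥ vcol k)) = R2 := by
    intro z hz
    have h1 : ((∑ k, ns (G z *ᵥ vcol k) : ℝ):ℂ) = (R2:ℂ) := by
      calc ((∑ k, ns (G z *ᵥ vcol k) : ℝ):ℂ) = ∑ k, (ns (G z *ᵥ vcol k) : ℂ) := by push_cast; rfl
        _ = trace ((G z)ᴴ * G z) := frob _
        _ = R2c := lineG z hz
        _ = (R2:ℂ) := hR2c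
    exact_mod_cast h1
  have bound1 : ∀ z, z.re = 1 → ‖H z‖ ≤ Real.sqrt m * Real.sqrt R2 := by
    intro z hz
    rw [Hrep z]
    calc ‖∑ k, cf (μ k) (ee z) * ((Vᴴ * Sᴴ) * G z * V) k k‖
        ≤ ∑ k, ‖cf (μ k) (ee z) * ((Vᴴ * Sᴴ) * G z * V) k k‖ :=
          norm_sum_le _ _
      _ ≤ ∑ k, (μ k ^ ((p:ℝ)/2)) * Real.sqrt (ns (G z *ᵥ vcol k)) := by
          refine Finset.sum_le_sum fun k _ => ?_
          rw [norm_mul]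
          by_cases hk : μ k = 0
          · rw [cf_abs (hμ k), if_pos hk, zero_mul, hk,
              Real.zero_rpow (by positivity : (p:ℝ)/2 ≠ 0), zero_mul]
          · have hkpos : 0 < μ k := lt_of_le_of_ne (hμ k) (Ne.symm hk)
            rw [cf_abs (hμ k), if_neg hk]
            calc μ k ^ (ee z).re * ‖((Vᴴ * Sᴴ) * G z * V) k k‖
                ≤ μ k ^ (ee z).re * (Real.sqrt (μ k) * Real.sqrt (ns (G z *ᵥ vcol k))) :=
                  mul_le_mul_of_nonneg_left (entrybound z k) (Real.rpow_nonneg (hμ k) _)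
              _ = (μ k ^ ((p:ℝ)/2)) * Real.sqrt (ns (G z *ᵥ vcol k)) := by
                  rw [← mul_assoc]
                  congr 1
                  rw [hre3, hz, mul_one, Real.sqrt_eq_rpow, ← Real.rpow_add hkpos]
                  congr 1
                  rw [hd0, hc1]; ring
      _ ≤ Real.sqrt (∑ k, (μ k ^ ((p:ℝ)/2))^2)
            * Real.sqrt (∑ k, (Real.sqrt (ns (G z *ᵥ vcol k)))^2) :=
          real_cs _ _ (fun k => Real.rpow_nonneg (hμ k) _) (fun k => Real.sqrt_nonneg _)
      _ = Real.sqrt m * Real.sqrt R2 := by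
          congr 2
          · rw [hmdef]
            refine Finset.sum_congr rfl fun k _ => ?_
            rw [← Real.rpow_natCast (μ k ^ ((p:ℝ)/2)) 2, ← Real.rpow_mul (hμ k),
              ← Real.rpow_natCast (μ k) p]
            norm_num
          · rw [← nsline1 z hz]
            exact Finset.sum_congr rfl fun k _ => Real.sq_sqrt (ns_nonneg _)
  have Gentry : ∀ z i j, G z i j = cf (b i) (w1 z) * W i j * cf (a j) (w2 z) := by
    intro z i j
    rw [hG]; dsimp only
    rw [Dc, Dc, mul_diagonal, diagonal_mul]
  have Hsum : ∀ z, H z = ∑ k, ∑ i, ∑ j,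
      cf (μ k) (ee z) * ((Vᴴ * Sᴴ) k i * (cf (b i) (w1 z) * W i j * cf (a j) (w2 z)) * V j k) := by
    intro z
    rw [Hrep z]
    refine Finset.sum_congr rfl fun k _ => ?_
    rw [PXQ, Finset.mul_sum]
    refine Finset.sum_congr rfl fun i _ => ?_
    rw [Finset.mul_sum]
    refine Finset.sum_congr rfl fun j _ => ?_
    rw [Gentry]
  have hfw1 : Differentiable ℂ w1 := by
    rw [hw1]; exact differentiable_id.const_mul _
  have hfw2 : Differentiable ℂ w2 := by
    rw [hw2]; exact differentiable_id.const_mul _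
  have hfee : Differentiable ℂ ee := by
    rw [hee]; exact (differentiable_const _).sub (differentiable_id.const_mul _)
  have diffH : Differentiable ℂ H := by
    rw [show H = fun z => ∑ k, ∑ i, ∑ j,
      cf (μ k) (ee z) * ((Vᴴ * Sᴴ) k i * (cf (b i) (w1 z) * W i j * cf (a j) (w2 z)) * V j k)
      from funext Hsum]
    refine Differentiable.fun_sum fun k _ => Differentiable.fun_sum fun i _ =>
      Differentiable.fun_sum fun j _ => ?_
    exact (cf_diff hfee).mul
      (((differentiable_const _).mul
        (((cf_diff hfw1).mul (differentiable_const _)).mul (cf_diff hfw2))).mul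
        (differentiable_const _))
  have hc10 : 0 ≤ c1 := by rw [hc1]; positivity
  set C : ℝ := ∑ k, ∑ i, ∑ j,
      max (μ k ^ (d0 - c1)) (μ k ^ d0) *
        (‖(Vᴴ * Sᴴ) k i‖ *
          (max ((b i) ^ (0:ℝ)) ((b i) ^ c1) * ‖W i j‖
            * max ((a j) ^ (0:ℝ)) ((a j) ^ ((p:ℝ)))) *
          ‖V j k‖) with hCdef
  have hbB : BddAbove ((norm ∘ H) '' Complex.HadamardThreeLines.verticalClosedStrip 0 1) := by
    refine ⟨C, ?_⟩
    rintro y ⟨z, hz, rfl⟩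
    simp only [Function.comp]
    rw [Hsum z, hCdef]
    have hz' : z.re ∈ Set.Icc (0:ℝ) 1 := hz
    refine le_trans (norm_sum_le _ _) ?_
    refine le_trans (Finset.sum_le_sum fun k _ => norm_sum_le _ _) ?_
    refine le_trans (Finset.sum_le_sum fun k _ => Finset.sum_le_sum fun i _ =>
      norm_sum_le _ _) ?_
    refine Finset.sum_le_sum fun k _ => Finset.sum_le_sum fun i _ =>
      Finset.sum_le_sum fun j _ => ?_
    simp only [norm_mul]
    have hza : 0 ≤ c1 * z.re := mul_nonneg hc10 hz'.1
    have hzb : c1 * z.re ≤ c1 := by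
      have := mul_le_mul_of_nonneg_left hz'.2 hc10
      simpa using this
    have hzc : 0 ≤ (p:ℝ) * z.re := mul_nonneg hpR.le hz'.1
    have hzd : (p:ℝ) * z.re ≤ (p:ℝ) := by
      have := mul_le_mul_of_nonneg_left hz'.2 hpR.le
      simpa using this
    have h1 : ‖cf (μ k) (ee z)‖ ≤ max (μ k ^ (d0 - c1)) (μ k ^ d0) := by
      refine cf_abs_le_max (hμ k) ?_
      rw [hre3, Set.mem_Icc]
      constructor
      · linarith
      · linarith
    have h2 : ‖cf (b i) (w1 z)‖ ≤ max ((b i) ^ (0:ℝ)) ((b i) ^ c1) := by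
      refine cf_abs_le_max (hb i) ?_
      rw [hre1, Set.mem_Icc]
      constructor
      · linarith
      · linarith
    have h3 : ‖cf (a j) (w2 z)‖ ≤ max ((a j) ^ (0:ℝ)) ((a j) ^ ((p:ℝ))) := by
      refine cf_abs_le_max (ha j) ?_
      rw [hre2, Set.mem_Icc]
      constructor
      · linarith
      · linarith
    gcongr
    exact le_max_iff.mpr (Or.inl (Real.rpow_nonneg (hμ k) _))
  have entryz₀ : (Vᴴ * Sᴴ) * G z₀ * V = diagonal (fun k => (μ k:ℂ)) := by
    rw [← hSdef, ← specD]
    simp only [Matrix.mul_assoc]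
  have heez₀ : ee z₀ = (((p:ℝ) - 1 : ℝ) : ℂ) := by
    rw [hee]; dsimp only
    rw [hz₀, ← Complex.ofReal_mul, ← Complex.ofReal_sub]
    congr 1
    rw [hd0, hc1]
    field_simp
    ring
  have Hval : H z₀ = (m:ℂ) := by
    rw [Hrep z₀, hmdef]
    push_cast
    refine Finset.sum_congr rfl fun k _ => ?_
    rw [entryz₀, Matrix.diagonal_apply_eq, heez₀]
    by_cases hk : μ k = 0
    · rw [hk]
      simp [cf, zero_pow (by omega : p ≠ 0)]
    · have hkpos : 0 < μ k := lt_of_le_of_ne (hμ k) (Ne.symm hk)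
      rw [cf_real (hμ k), if_neg hk, ← Complex.ofReal_pow, ← Complex.ofReal_mul]
      congr 1
      rw [← Real.rpow_natCast (μ k) p]
      nth_rewrite 2 [show μ k = μ k ^ (1:ℝ) from (Real.rpow_one _).symm]
      rw [← Real.rpow_add hkpos]
      congr 1
      ring
  have hmem : z₀ ∈ Complex.HadamardThreeLines.verticalClosedStrip 0 1 := by
    simp only [Complex.HadamardThreeLines.verticalClosedStrip, Set.mem_preimage, hz₀,
      Complex.ofReal_re, Set.mem_Icc]
    constructor
    · positivity
    · have h1 : (1:ℝ) ≤ (p:ℝ) := by exact_mod_cast hp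
      rw [inv_le_one_iff₀]
      right; exact h1
  have happ := Complex.HadamardThreeLines.norm_le_interp_of_mem_verticalClosedStrip' (f := H) zero_lt_one hmem
    diffH.diffContOnCl hbB
    (fun z hz => by exact bound0 z (by simpa using hz))
    (fun z hz => by exact bound1 z (by simpa using hz))
  rw [Hval] at happ
  have hz₀re : z₀.re = ((p:ℝ))⁻¹ := by rw [hz₀, Complex.ofReal_re]
  rw [hz₀re, sub_zero, sub_zero, div_one] at happ
  have hnm : ‖((m:ℝ):ℂ)‖ = m := by
    rw [Complex.norm_real, Real.norm_of_nonneg hm0]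
  rw [hnm] at happ
  have hfinal : m ≤ R2 := arith hm0 hR20 (inv_pos.mpr hpR) happ
  rw [hLm, hR2c]
  exact_mod_cast hfinal

/-- conjugation by a unitary commutes with powers -/
lemma conj_pow {n : ℕ} (U D : Matrix (Fin n) (Fin n) ℂ) (hU1 : Uᴴ * U = 1)
    (hU2 : U * Uᴴ = 1) (q : ℕ) : (U * D * Uᴴ)^q = U * D^q * Uᴴ := by
  induction q with
  | zero => simp [hU2]
  | succ q ih =>
      rw [pow_succ, ih, pow_succ]
      calc U * D^q * Uᴴ * (U * D * Uᴴ)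
          = U * D^q * (Uᴴ * U) * D * Uᴴ := by simp only [Matrix.mul_assoc]
        _ = _ := by rw [hU1, Matrix.mul_one]; simp only [Matrix.mul_assoc]

theorem main {n : ℕ} (A B Z : Matrix (Fin n) (Fin n) ℂ)
    (hA : A.PosSemidef) (hB : B.PosSemidef)
    (hZ : ((1 : Matrix (Fin n) (Fin n) ℂ) - Zᴴ * Z).PosSemidef)
    (p : ℕ) (hp : 1 ≤ p) :
    Matrix.trace ((A * Zᴴ * B * Z * A) ^ p)
      ≤ Matrix.trace (A ^ p * Zᴴ * B ^ p * Z * A ^ p) := by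
  classical
  set Ua : Matrix (Fin n) (Fin n) ℂ := (hA.1.eigenvectorUnitary : Matrix (Fin n) (Fin n) ℂ)
    with hUadef
  set Ub : Matrix (Fin n) (Fin n) ℂ := (hB.1.eigenvectorUnitary : Matrix (Fin n) (Fin n) ℂ)
    with hUbdef
  set av : Fin n → ℝ := hA.1.eigenvalues with hav
  set bv : Fin n → ℝ := hB.1.eigenvalues with hbv
  have hUa1 : Uaᴴ * Ua = 1 := by
    rw [← Matrix.star_eq_conjTranspose]
    exact Matrix.mem_unitaryGroup_iff'.mp hA.1.eigenvectorUnitary.2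
  have hUa2 : Ua * Uaᴴ = 1 := by
    rw [← Matrix.star_eq_conjTranspose]
    exact Matrix.mem_unitaryGroup_iff.mp hA.1.eigenvectorUnitary.2
  have hUb1 : Ubᴴ * Ub = 1 := by
    rw [← Matrix.star_eq_conjTranspose]
    exact Matrix.mem_unitaryGroup_iff'.mp hB.1.eigenvectorUnitary.2
  have hUb2 : Ub * Ubᴴ = 1 := by
    rw [← Matrix.star_eq_conjTranspose]
    exact Matrix.mem_unitaryGroup_iff.mp hB.1.eigenvectorUnitary.2
  have specA : A = Ua * diagonal (fun i => (av i:ℂ)) * Uaᴴ := by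
    rw [hUadef, ← Matrix.star_eq_conjTranspose]
    exact hA.1.spectral_theorem
  have specB : B = Ub * diagonal (fun i => (bv i:ℂ)) * Ubᴴ := by
    rw [hUbdef, ← Matrix.star_eq_conjTranspose]
    exact hB.1.spectral_theorem
  set W : Matrix (Fin n) (Fin n) ℂ := Ubᴴ * Z * Ua with hWdef
  have hWc : ((1 : Matrix (Fin n) (Fin n) ℂ) - Wᴴ * W).PosSemidef := by
    have e : Wᴴ * W = Uaᴴ * (Zᴴ * Z) * Ua := by
      rw [hWdef]
      simp only [conjTranspose_mul, conjTranspose_conjTranspose, Matrix.mul_assoc]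
      rw [← Matrix.mul_assoc Ub Ubᴴ, hUb2, Matrix.one_mul]
    have h1 : (1 : Matrix (Fin n) (Fin n) ℂ) - Wᴴ * W
        = Uaᴴ * ((1 : Matrix (Fin n) (Fin n) ℂ) - Zᴴ * Z) * Ua := by
      rw [e, Matrix.mul_sub, Matrix.sub_mul, Matrix.mul_one, hUa1]
    rw [h1]
    exact hZ.conjTranspose_mul_mul_same Ua
  set Da : Matrix (Fin n) (Fin n) ℂ := diagonal (fun i => (av i:ℂ)) with hDadef
  set Db : Matrix (Fin n) (Fin n) ℂ := diagonal (fun i => (bv i:ℂ)) with hDbdef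
  have hXY : A * Zᴴ * B * Z * A = Ua * (Da * Wᴴ * Db * W * Da) * Uaᴴ := by
    rw [specA, specB, hWdef]
    simp only [conjTranspose_mul, conjTranspose_conjTranspose, Matrix.mul_assoc]
  have hap : A^p = Ua * Da^p * Uaᴴ := by
    rw [specA, conj_pow _ _ hUa1 hUa2]
  have hbp : B^p = Ub * Db^p * Ubᴴ := by
    rw [specB, conj_pow _ _ hUb1 hUb2]
  have hXYp : A^p * Zᴴ * B^p * Z * A^p = Ua * (Da^p * Wᴴ * Db^p * W * Da^p) * Uaᴴ := by
    rw [hap, hbp, hWdef]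
    simp only [conjTranspose_mul, conjTranspose_conjTranspose, Matrix.mul_assoc]
  have htr1 : trace ((A * Zᴴ * B * Z * A)^p) = trace ((Da * Wᴴ * Db * W * Da)^p) := by
    rw [hXY, conj_pow _ _ hUa1 hUa2, trace_mul_cycle, ← Matrix.mul_assoc, hUa1, Matrix.one_mul]
  have htr2 : trace (A^p * Zᴴ * B^p * Z * A^p) = trace (Da^p * Wᴴ * Db^p * W * Da^p) := by
    rw [hXYp, trace_mul_cycle, ← Matrix.mul_assoc, hUa1, Matrix.one_mul]
  have hDc1a : Dc av 1 = Da := by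
    rw [hDadef]
    unfold Dc
    have : (fun i => cf (av i) 1) = fun i => (av i:ℂ) :=
      funext fun i => cf_one_exp (hA.eigenvalues_nonneg i)
    rw [this]
  have hDc1b : Dc bv 1 = Db := by
    rw [hDbdef]
    unfold Dc
    have : (fun i => cf (bv i) 1) = fun i => (bv i:ℂ) :=
      funext fun i => cf_one_exp (hB.eigenvalues_nonneg i)
    rw [this]
  have hDcpa : Dc av (p:ℂ) = Da^p := by
    rw [hDadef, diagonal_pow]
    unfold Dc
    have : (fun i => cf (av i) (p:ℂ)) = fun i => ((av i:ℂ))^p :=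
      funext fun i => cf_nat (hA.eigenvalues_nonneg i) hp
    rw [this]
    congr 1
  have hDcpb : Dc bv (p:ℂ) = Db^p := by
    rw [hDbdef, diagonal_pow]
    unfold Dc
    have : (fun i => cf (bv i) (p:ℂ)) = fun i => ((bv i:ℂ))^p :=
      funext fun i => cf_nat (hB.eigenvalues_nonneg i) hp
    rw [this]
    congr 1
  have hk := key av bv (fun i => hA.eigenvalues_nonneg i) (fun i => hB.eigenvalues_nonneg i)
    W hWc p hp
  rw [hDc1a, hDc1b, hDcpa, hDcpb] at hk
  rw [htr1, htr2]
  exact hk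

end ALT

theorem stmt_4 {n : ℕ} (A B Z : Matrix (Fin n) (Fin n) ℂ)
    (hA : A.PosSemidef) (hB : B.PosSemidef) (hZ : ((1 : Matrix (Fin n) (Fin n) ℂ) - Zᴴ * Z).PosSemidef)
    (p : ℕ) (hp : 1 ≤ p) :
    Matrix.trace ((A * Zᴴ * B * Z * A) ^ p) ≤ Matrix.trace (A ^ p * Zᴴ * B ^ p * Z * A ^ p) :=
  ALT.main A B Z hA hB hZ p hp
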